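/- arXiv:1808.02838 — 2 statements merged into one kernel-verified Lean document; each statement's English description precedes it below -/
import Mathlib

section
/- Let B ≥ 1 and let r, s : Fin B → ℝ be vectors with strictly positive entries such that r majorizes s. Then for every t ≥ 0, ∏_{i} (1 − exp(−r i · t)) ≤ ∏_{i} (1 − exp(−s i · t)). Equivalently, the tail probability of the maximum of B independent exponential random variables with rates r i, namely 1 − ∏_i (1 − exp(−r i · t)), is a Schur-convex function of the rate vector: it is pointwise at least the corresponding tail for rates s i. -/
/-!
The function `x ↦ log (1 - exp (-x))` is increasing and concave on `(0, ∞)`, with tangent slope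
`1 / (exp y - 1)` at `y`. Sort both rate vectors increasingly. Majorization of `s` by `r` implies
that every prefix sum of the sorted `r` is at most the corresponding prefix sum of the
sorted `s`. Summing the tangent-line inequalities at the sorted `s` and applying Abel summation
(the slopes decrease along the sorted `s`) gives Karamata's inequality
`∑ log (1 - exp (-r i t)) ≤ ∑ log (1 - exp (-s i t))`; exponentiating gives the theorem.
-/

open Finset

/-- `Majorizes r s` : the vector `r` majorizes the vector `s`, i.e. they have the same
total sum and, for every `m ≤ B`, the largest sum of `m` entries of `r` is at least the
largest sum of `m` entries of `s`. -/
def Majorizes {B : ℕ} (r s : Fin B → ℝ) : Prop :=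
  (∑ i, r i = ∑ i, s i) ∧
    ∀ m ≤ B, ∀ S : Finset (Fin B), S.card = m →
      ∃ T : Finset (Fin B), T.card = m ∧ ∑ i ∈ S, s i ≤ ∑ i ∈ T, r i

theorem Finset.sum_le_sum_of_card_eq_of_forall_le {ι M : Type*} [AddCommMonoid M] [LinearOrder M]
    [IsOrderedAddMonoid M] {A C : Finset ι} {g : ι → M} (hcard : #A = #C)
    (h : ∀ x ∈ A, ∀ y ∈ C, g x ≤ g y) : ∑ x ∈ A, g x ≤ ∑ y ∈ C, g y := by
  rcases C.eq_empty_or_nonempty with rfl | hC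
  · rw [card_empty, card_eq_zero] at hcard
    simp [hcard]
  obtain ⟨y₀, hy₀, hmin⟩ := C.exists_min_image g hC
  calc ∑ x ∈ A, g x ≤ #A • g y₀ := A.sum_le_card_nsmul g _ fun x hx ↦ h x hx y₀ hy₀
    _ = #C • g y₀ := by rw [hcard]
    _ ≤ ∑ y ∈ C, g y := C.card_nsmul_le_sum g _ hmin

theorem Fin.sum_Iic_le_sum_of_monotone {n : ℕ} {M : Type*} [AddCommMonoid M] [LinearOrder M]
    [IsOrderedAddMonoid M] {g : Fin n → M} (hg : Monotone g) (k : Fin n) {S : Finset (Fin n)}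
    (hS : #S = k + 1) : ∑ i ∈ Iic k, g i ≤ ∑ i ∈ S, g i := by
  rw [← sum_inter_add_sum_sdiff (Iic k) S, ← sum_inter_add_sum_sdiff S (Iic k), inter_comm]
  gcongr 1
  refine sum_le_sum_of_card_eq_of_forall_le (card_sdiff_comm (by rw [hS, Fin.card_Iic])) ?_
  simp only [mem_sdiff, mem_Iic, not_le]
  exact fun x hx y hy ↦ hg (hx.1.trans hy.2.le)

/-- The `k + 1` smallest entries of `s` are the complement of `n - (k + 1)` entries, whose sum
majorization bounds by the sum of some `n - (k + 1)` entries of `r`. -/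
theorem Majorizes.sum_Iic_sort_le {n : ℕ} {r s : Fin n → ℝ} (h : Majorizes r s) (k : Fin n) :
    ∑ i ∈ Iic k, r (Tuple.sort r i) ≤ ∑ i ∈ Iic k, s (Tuple.sort s i) := by
  set P := (Iic k).map (Tuple.sort s).toEmbedding
  have hP : #Pᶜ = n - (k + 1) := by rw [card_compl, card_map, Fin.card_Iic, Fintype.card_fin]
  obtain ⟨T, hT, hle⟩ := h.2 _ (Nat.sub_le _ _) Pᶜ hP
  have hTc : #(Tᶜ.map (Tuple.sort r).symm.toEmbedding) = k + 1 := by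
    rw [card_map, card_compl, hT, Fintype.card_fin]; have := k.2; omega
  have hTc_sum := Fin.sum_Iic_le_sum_of_monotone (Tuple.monotone_sort r) k hTc
  rw [sum_map] at hTc_sum
  simp only [Equiv.coe_toEmbedding, Function.comp_apply, Equiv.apply_symm_apply] at hTc_sum
  have hPsum : ∑ i ∈ Iic k, s (Tuple.sort s i) = ∑ i ∈ P, s i := by simp [P]
  linarith [sum_compl_add_sum P s, sum_compl_add_sum T r, h.1]

/-- Abel summation. The lower bound `a` is what makes the induction go through: the last value
of `c` bounds `c` on the shorter tuple. -/
theorem Fin.sum_mul_le_mul_sum_of_antitone :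
    ∀ {n : ℕ} {c d : Fin n → ℝ} {a : ℝ}, Antitone c → (∀ i, a ≤ c i) →
      (∀ k, ∑ i ∈ Iic k, d i ≤ 0) → ∑ i, c i * d i ≤ a * ∑ i, d i
  | 0, _, _, _, _, _, _ => by simp
  | n + 1, c, d, a, hc, ha, hd => by
    have hlast : ∑ i, d i ≤ 0 := by simpa [← Fin.top_eq_last, Iic_top] using hd ⊤
    have ih := Fin.sum_mul_le_mul_sum_of_antitone (c := c ∘ Fin.castSucc) (d := d ∘ Fin.castSucc)
      (a := c (Fin.last n)) (hc.comp_monotone Fin.strictMono_castSucc.monotone)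
      (fun i ↦ hc (Fin.le_last _)) (fun k ↦ by simpa [Fin.sum_Iic_castSucc] using hd k.castSucc)
    simp only [Function.comp_apply] at ih
    calc ∑ i, c i * d i ≤ c (Fin.last n) * ∑ i, d i := by
          simp only [Fin.sum_univ_castSucc]; linarith
      _ ≤ a * ∑ i, d i := mul_le_mul_of_nonpos_right (ha _) hlast

/-- Karamata's inequality for an increasing concave `f`, whose supergradient at `y` is `g y`. -/
theorem Fin.sum_le_sum_of_sum_Iic_le {n : ℕ} {s : Set ℝ} {f g : ℝ → ℝ}
    (hfg : ∀ x ∈ s, ∀ y ∈ s, f x ≤ f y + g y * (x - y)) (hg : AntitoneOn g s)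
    (hg₀ : ∀ y ∈ s, 0 ≤ g y) {u v : Fin n → ℝ} (hu : ∀ i, u i ∈ s) (hv : ∀ i, v i ∈ s)
    (hvm : Monotone v) (huv : ∀ k, ∑ i ∈ Iic k, u i ≤ ∑ i ∈ Iic k, v i) :
    ∑ i, f (u i) ≤ ∑ i, f (v i) := by
  have habel : ∑ i, g (v i) * (u i - v i) ≤ 0 := by
    simpa using Fin.sum_mul_le_mul_sum_of_antitone (a := 0)
      (fun i j hij ↦ hg (hv i) (hv j) (hvm hij)) (fun i ↦ hg₀ _ (hv i))
      (fun k ↦ by simpa [sum_sub_distrib] using huv k)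
  calc ∑ i, f (u i) ≤ ∑ i, (f (v i) + g (v i) * (u i - v i)) :=
        sum_le_sum fun i _ ↦ hfg _ (hu i) _ (hv i)
    _ ≤ ∑ i, f (v i) := by rw [sum_add_distrib]; linarith

namespace Real

theorem one_sub_exp_neg_pos {x : ℝ} (hx : 0 < x) : 0 < 1 - exp (-x) :=
  sub_pos.2 (exp_lt_one_iff.2 (neg_neg_of_pos hx))

theorem log_one_sub_exp_neg_le {x y : ℝ} (hx : 0 < x) (hy : 0 < y) :
    log (1 - exp (-x)) ≤ log (1 - exp (-y)) + (exp y - 1)⁻¹ * (x - y) := by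
  have hx' := one_sub_exp_neg_pos hx
  have hy' := one_sub_exp_neg_pos hy
  have hey : 0 < exp y - 1 := sub_pos.2 (one_lt_exp_iff.2 hy)
  calc log (1 - exp (-x)) = log (1 - exp (-y)) + log ((1 - exp (-x)) / (1 - exp (-y))) := by
        rw [log_div hx'.ne' hy'.ne']; ring
    _ ≤ log (1 - exp (-y)) + ((1 - exp (-x)) / (1 - exp (-y)) - 1) := by
        gcongr; exact log_le_sub_one_of_pos (div_pos hx' hy')
    _ = log (1 - exp (-y)) + (exp y - 1)⁻¹ * (1 - exp (y - x)) := by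
        rw [exp_neg, exp_neg, exp_sub]; field_simp; ring
    _ ≤ log (1 - exp (-y)) + (exp y - 1)⁻¹ * (x - y) := by
        gcongr _ + _ * ?_; linarith [add_one_le_exp (y - x)]

theorem antitoneOn_inv_exp_sub_one : AntitoneOn (fun y ↦ (exp y - 1)⁻¹) (Set.Ioi 0) :=
  fun x hx _ _ hxy ↦ inv_anti₀ (sub_pos.2 (one_lt_exp_iff.2 hx)) (by gcongr)

end Real

theorem max_exponential_tail_schur_convex_general (B : ℕ) (r s : Fin B → ℝ)
    (hr : ∀ i, 0 < r i) (hs : ∀ i, 0 < s i) (hmaj : Majorizes r s) :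
    ∀ t : ℝ, 0 ≤ t →
      ∏ i, (1 - Real.exp (-(r i * t))) ≤ ∏ i, (1 - Real.exp (-(s i * t))) := by
  intro t ht
  obtain rfl | ht := ht.eq_or_lt
  · simp
  set σ := Tuple.sort r
  set τ := Tuple.sort s
  have hφ : ∀ x, 0 < x → 0 < 1 - Real.exp (-(x * t)) :=
    fun x hx ↦ Real.one_sub_exp_neg_pos (mul_pos hx ht)
  have hlog : ∑ i, Real.log (1 - Real.exp (-(r (σ i) * t))) ≤
      ∑ i, Real.log (1 - Real.exp (-(s (τ i) * t))) :=
    Fin.sum_le_sum_of_sum_Iic_le (fun x hx y hy ↦ Real.log_one_sub_exp_neg_le hx hy)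
      Real.antitoneOn_inv_exp_sub_one
      (fun y hy ↦ inv_nonneg.2 (sub_nonneg.2 (Real.one_le_exp (le_of_lt hy))))
      (fun i ↦ mul_pos (hr _) ht) (fun i ↦ mul_pos (hs _) ht)
      ((Tuple.monotone_sort s).mul_const ht.le)
      (fun k ↦ by
        simpa only [← sum_mul] using mul_le_mul_of_nonneg_right (hmaj.sum_Iic_sort_le k) ht.le)
  rw [← Equiv.prod_comp σ (fun i ↦ 1 - Real.exp (-(r i * t))),
    ← Equiv.prod_comp τ (fun i ↦ 1 - Real.exp (-(s i * t))),
    ← Real.log_le_log_iff (prod_pos fun i _ ↦ hφ _ (hr _)) (prod_pos fun i _ ↦ hφ _ (hs _)),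
    Real.log_prod fun i _ ↦ (hφ _ (hr _)).ne', Real.log_prod fun i _ ↦ (hφ _ (hs _)).ne']
  exact hlog

/-- If the positive rate vector `r` majorizes the positive rate vector `s`, then for every
`t ≥ 0` the CDF at `t` of the maximum of `B` independent exponential random variables with
rates `r i` is at most that for rates `s i`; equivalently, the tail probability
`1 - ∏ i (1 - exp (-(r i) t))` of the maximum is a Schur-convex function of the rate
vector. -/
theorem max_exponential_tail_schur_convex (B : ℕ) (hB : 1 ≤ B) (r s : Fin B → ℝ)
    (hr : ∀ i, 0 < r i) (hs : ∀ i, 0 < s i) (hmaj : Majorizes r s) :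
    ∀ t : ℝ, 0 ≤ t →
      ∏ i, (1 - Real.exp (-(r i * t))) ≤ ∏ i, (1 - Real.exp (-(s i * t))) :=
  max_exponential_tail_schur_convex_general B r s hr hs hmaj
end

section
/- Let X, Y, Z be i.i.d. exponential random variables with rate λ > 0 (formally, let μ be the product on (Fin 3 → ℝ) of three copies of the exponential distribution with rate λ, and write X, Y, Z for the three coordinate functions). Then E[max(X, min(Y, Z))] < E[max(X, Y)]. -/
/-!
Pointwise `max X (min Y Z) ≤ max X Y`, and the inequality is strict on the event
`X, Z < 1 < Y`, which has positive probability because the exponential density is positive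
on `(0, ∞)`. Exponential variables have finite mean, so both sides are integrable and the strict
inequality survives integration.
-/

open MeasureTheory ProbabilityTheory Real Set

theorem MeasureTheory.integral_lt_integral_of_ae_le_of_measure_setOfPred_lt_ne_zero
    {α : Type*} [MeasurableSpace α] {μ : Measure α} {f g : α → ℝ}
    (hf : Integrable f μ) (hg : Integrable g μ) (hle : f ≤ᵐ[μ] g)
    (hlt : μ {x | f x < g x} ≠ 0) :
    ∫ x, f x ∂μ < ∫ x, g x ∂μ := by
  rw [← sub_pos, ← integral_sub hg hf, integral_pos_iff_support_of_nonneg_ae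
    (hle.mono fun _ => sub_nonneg.2) (hg.sub hf)]
  refine pos_iff_ne_zero.2 (mt (measure_mono_null fun x hx => ?_) hlt)
  exact (sub_pos.2 hx).ne'

namespace ProbabilityTheory

lemma expMeasure_eq_withDensity (r : ℝ) :
    expMeasure r = volume.withDensity (exponentialPDF r) := rfl

lemma measurable_exponentialPDF (r : ℝ) : Measurable (exponentialPDF r) :=
  ENNReal.measurable_ofReal.comp (measurable_exponentialPDFReal r)

lemma integrable_id_expMeasure {r : ℝ} (hr : 0 < r) :
    Integrable (fun x : ℝ => x) (expMeasure r) := by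
  have hdens : (fun x : ℝ => x * (exponentialPDF r x).toReal) =
      (Ioi 0).indicator fun x => r * (x ^ (1 : ℝ) * exp (-r * x ^ (1 : ℝ))) := by
    ext x
    rcases le_or_gt x 0 with hx | hx
    · rcases hx.lt_or_eq with hx | rfl
      · simp [exponentialPDF_of_neg hx, indicator_of_notMem, hx.not_gt]
      · simp
    · rw [indicator_of_mem (mem_Ioi.2 hx), exponentialPDF_of_nonneg hx.le,
        ENNReal.toReal_ofReal (by positivity), rpow_one]
      ring_nf
  rw [expMeasure_eq_withDensity, integrable_withDensity_iff (measurable_exponentialPDF r)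
    (ae_of_all _ fun _ => ENNReal.ofReal_lt_top), hdens, integrable_indicator_iff measurableSet_Ioi]
  exact (integrableOn_rpow_mul_exp_neg_mul_rpow (by norm_num) one_pos hr).const_mul r

lemma expMeasure_ne_zero_of_subset_Ioi {r : ℝ} (hr : 0 < r) {s : Set ℝ} (hs : s ⊆ Ioi 0)
    (hvol : volume s ≠ 0) : expMeasure r s ≠ 0 := by
  rwa [expMeasure_eq_withDensity, Ne, withDensity_apply_eq_zero (measurable_exponentialPDF r),
    inter_eq_right.2 fun x hx => ?_]
  rw [mem_ofPred_eq, exponentialPDF_of_nonneg (hs hx).le, Ne, ENNReal.ofReal_eq_zero, not_le]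
  exact mul_pos hr (exp_pos _)

end ProbabilityTheory

/-- For i.i.d. exponential random variables `X, Y, Z` with rate `λ > 0` (coordinates of the
product of three exponential distributions), `E[max(X, min(Y, Z))] < E[max(X, Y)]`. -/
theorem exp_max_min_lt_max (lam : ℝ) (hlam : 0 < lam) :
    ∫ x : Fin 3 → ℝ, max (x 0) (min (x 1) (x 2))
        ∂(Measure.pi fun _ : Fin 3 => expMeasure lam)
      < ∫ x : Fin 3 → ℝ, max (x 0) (x 1)
        ∂(Measure.pi fun _ : Fin 3 => expMeasure lam) := by
  have := isProbabilityMeasure_expMeasure hlam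
  have hX (i : Fin 3) : Integrable (fun x : Fin 3 → ℝ => x i)
      (Measure.pi fun _ : Fin 3 => expMeasure lam) :=
    (measurePreserving_eval (fun _ => expMeasure lam) i).integrable_comp_of_integrable
      (integrable_id_expMeasure hlam)
  refine integral_lt_integral_of_ae_le_of_measure_setOfPred_lt_ne_zero
    ((hX 0).sup ((hX 1).inf (hX 2))) ((hX 0).sup (hX 1))
    (ae_of_all _ fun x => max_le_max le_rfl (min_le_left _ _)) ?_
  let box : Fin 3 → Set ℝ := ![Ioo 0 1, Ioi 1, Ioo 0 1]
  have hbox : univ.pi box ⊆ {x | max (x 0) (min (x 1) (x 2)) < max (x 0) (x 1)} := by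
    intro x hx
    have h0 := (hx 0 trivial).2
    have h1 : 1 < x 1 := hx 1 trivial
    have h2 := (hx 2 trivial).2
    exact (max_lt h0 ((min_le_right _ _).trans_lt h2)).trans (h1.trans_le (le_max_right _ _))
  refine mt (measure_mono_null hbox) ?_
  have hIoo : expMeasure lam (Ioo 0 1) ≠ 0 :=
    expMeasure_ne_zero_of_subset_Ioi hlam Ioo_subset_Ioi_self (by simp)
  have hIoi : expMeasure lam (Ioi 1) ≠ 0 :=
    expMeasure_ne_zero_of_subset_Ioi hlam (Ioi_subset_Ioi zero_le_one) (by simp)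
  rw [Measure.pi_pi, Fin.prod_univ_three]
  exact mul_ne_zero (mul_ne_zero hIoo hIoi) hIoo
end
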